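/- arXiv:1909.03257 — 2 statements merged into one kernel-verified Lean document; each statement's English description precedes it below -/
import Mathlib

section
/- Let (η_i)_{i≥0} and (θ_j)_{j≥0} be sequences of pairwise distinct complex numbers, N ≥ 1 with associated integers d, m, and Ω_N, 𝒫_N as in the bidimensional intertwining setting. If (η_p,θ_q) ∈ Ω_N with p+q ≤ d−2 and p = m, then for all (z,w) ∈ ℂ²: l^{(N)}_{(η_m,θ_q)}(z,w) = ∏_{i=0}^{m−1} (z−η_i)/(η_m−η_i) ∏_{j=0,j≠q}^{d−m} (w−θ_j)/(θ_q−θ_j) − ∏_{i=0}^{m−1} (z−η_i)/(η_m−η_i) ∏_{j=0,j≠q}^{d−m−2} (w−θ_j)/(θ_q−θ_j) + ∏_{i=0,i≠m}^{m+1} (z−η_i)/(η_m−η_i) ∏_{j=0,j≠q}^{d−m−2} (w−θ_j)/(θ_q−θ_j) + Σ_{r=1}^{d−m−q−2} [∏_{i=0,i≠m}^{m+r+1} (z−η_i)/(η_m−η_i) ∏_{j=0,j≠q}^{d−m−r−2} (w−θ_j)/(θ_q−θ_j) − ∏_{i=0,i≠m}^{m+r} (z−η_i)/(η_m−η_i)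 ∏_{j=0,j≠q}^{d−m−r−2} (w−θ_j)/(θ_q−θ_j)]. -/
/-!
A polynomial supported on a lower set `S ⊆ ℕ²` and vanishing at the grid points `(η k, θ l)`,
`(k, l) ∈ S`, is zero: its restriction to the line `w = θ 0` is a univariate polynomial with more
roots than its degree, so it is divisible by `w - θ 0`, and the quotient is in the same situation
for `S` shifted down by one row. The index set of `𝒫_N` is a lower set, so the FLIP is the only
element of `𝒫_N` with its values on `Ω_N`. The explicit formula is a combination of products of
univariate Lagrange bases of degrees `(t - 1, s - 1)` with `(t - 1, s - 1)` in the index set, so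
it lies in `𝒫_N`; its values on `Ω_N` follow by comparing `k` with `m`, the only non-trivial case
being `k > m`, `l = q`, where the correcting sum telescopes to a factor vanishing at `η k`.
-/

open Finset

/-- The index set of both `Ω_N` and the monomials spanning `𝒫_N` in the bidimensional
intertwining setting with parameters `d`, `m`: pairs `(k,l)` with `k+l < d`, or
`k+l = d` and `k ≤ m`. -/
def BidIdx (d m : ℕ) (p : ℕ × ℕ) : Prop :=
  p.1 + p.2 < d ∨ (p.1 + p.2 = d ∧ p.1 ≤ m)

/-- The polynomial space `𝒫_N` (as a space of functions on `ℂ²`): the span of the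
monomials `z^k w^l` with `(k,l)` in the index set. -/
noncomputable def PolySpace (d m : ℕ) : Submodule ℂ ((ℂ × ℂ) → ℂ) :=
  Submodule.span ℂ
    {f | ∃ k l : ℕ, BidIdx d m (k, l) ∧ f = fun p : ℂ × ℂ => p.1 ^ k * p.2 ^ l}

/-- `L` is the fundamental Lagrange interpolation polynomial (FLIP) of the point
`(η_p, θ_q)` of `Ω_N`: it belongs to `𝒫_N`, equals `1` at `(η_p, θ_q)` and `0` at
every other point of `Ω_N`. -/
def IsFLIP (η θ : ℕ → ℂ) (d m : ℕ) (p q : ℕ) (L : (ℂ × ℂ) → ℂ) : Prop :=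
  L ∈ PolySpace d m ∧ L (η p, θ q) = 1 ∧
    ∀ k l : ℕ, BidIdx d m (k, l) → (k, l) ≠ (p, q) → L (η k, θ l) = 0

open Polynomial Function
open scoped Polynomial.Bivariate

namespace Polynomial

variable {R : Type*} [CommRing R]

theorem eq_zero_of_isLowerSet_of_eval_eq_zero [IsDomain R] {T : Set ℕ} (hT : IsLowerSet T)
    {η : ℕ → R} (hη : Injective η) {g : R[X]} (hcoeff : ∀ k ∉ T, g.coeff k = 0)
    (heval : ∀ k ∈ T, g.eval (η k) = 0) : g = 0 := by
  by_cases hdeg : g.natDegree ∈ T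
  · exact eq_zero_of_natDegree_lt_card_of_eval_eq_zero g (hη.comp Fin.val_injective)
      (fun k : Fin (g.natDegree + 1) => heval k (hT (Fin.is_le k) hdeg)) (by simp)
  · exact leadingCoeff_eq_zero.mp (hcoeff _ hdeg)

theorem coeff_eval_C_eq_zero {F : R[X][Y]} {k : ℕ} (h : ∀ l, (F.coeff l).coeff k = 0) (c : R) :
    (F.eval (C c)).coeff k = 0 := by
  rw [eval_eq_sum_range, finsetSum_coeff]
  exact sum_eq_zero fun l _ => by rw [← C_pow, coeff_mul_C, h, zero_mul]

theorem coeff_coeff_eq_zero_of_X_sub_CC_mul {G : R[X][Y]} {c : R} {k l₀ : ℕ}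
    (h : ∀ l ≥ l₀, (((X - CC c) * G).coeff (l + 1)).coeff k = 0) :
    ∀ l ≥ l₀, (G.coeff l).coeff k = 0 := by
  have hrec : ∀ l ≥ l₀, (G.coeff l).coeff k = c * (G.coeff (l + 1)).coeff k := fun l hl => by
    have := h l hl
    rwa [sub_mul, coeff_sub, coeff_X_mul, coeff_C_mul, coeff_sub, coeff_C_mul, sub_eq_zero] at this
  suffices ∀ j l, l₀ ≤ l → G.natDegree < l + j → (G.coeff l).coeff k = 0 from
    fun l hl => this (G.natDegree + 1) l hl (by omega)
  intro j
  induction j with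
  | zero =>
    intro l _ hl
    rw [add_zero] at hl
    rw [G.coeff_eq_zero_of_natDegree_lt hl, coeff_zero]
  | succ j ih => intro l hl hlj; rw [hrec l hl, ih (l + 1) (by omega) (by omega), mul_zero]

theorem eq_zero_of_isLowerSet_of_evalEval_eq_zero [IsDomain R] {S : Set (ℕ × ℕ)}
    (hS : IsLowerSet S) {η θ : ℕ → R} (hη : Injective η) (hθ : Injective θ) {F : R[X][Y]}
    (hcoeff : ∀ k l, (k, l) ∉ S → (F.coeff l).coeff k = 0)
    (heval : ∀ k l, (k, l) ∈ S → F.evalEval (η k) (θ l) = 0) : F = 0 := by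
  induction h : F.natDegree using Nat.strong_induction_on generalizing F S θ with
  | _ n ih =>
  have hrow : F.eval (C (θ 0)) = 0 :=
    eq_zero_of_isLowerSet_of_eval_eq_zero (T := {k | (k, 0) ∈ S})
      (fun a b hba ha => hS (Prod.mk_le_mk.2 ⟨hba, le_rfl⟩) ha) hη
      (fun k hk => coeff_eval_C_eq_zero
        (fun l => hcoeff k l fun hkl => hk (hS (Prod.mk_le_mk.2 ⟨le_rfl, l.zero_le⟩) hkl)) _)
      (fun k hk => heval k 0 hk)
  obtain ⟨G, rfl⟩ : X - CC (θ 0) ∣ F := dvd_iff_isRoot.mpr hrow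
  rcases eq_or_ne G 0 with rfl | hG
  · exact mul_zero _
  have hdeg : G.natDegree < n := by
    rw [← h, natDegree_mul (X_sub_C_ne_zero _) hG, natDegree_X_sub_C]
    omega
  -- `G` is interpolated on the lower set `S` shifted down by one row, with nodes `θ (l + 1)`.
  rw [ih _ hdeg (S := {p | (p.1, p.2 + 1) ∈ S}) (θ := fun l => θ (l + 1))
    (fun a b hba ha => hS (Prod.mk_le_mk.2 ⟨hba.1, Nat.succ_le_succ hba.2⟩) ha)
    (hθ.comp Nat.succ_injective) (fun k l hkl => ?_) (fun k l hkl => ?_) rfl, mul_zero]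
  · exact coeff_coeff_eq_zero_of_X_sub_CC_mul (fun l' hl' => hcoeff k (l' + 1) fun h' =>
      hkl (hS (Prod.mk_le_mk.2 ⟨le_rfl, Nat.succ_le_succ hl'⟩) h')) l le_rfl
  · have hθl : θ (l + 1) - θ 0 ≠ 0 := sub_ne_zero.mpr (hθ.ne l.succ_ne_zero)
    have := heval k (l + 1) hkl
    rw [evalEval_mul, evalEval_sub, evalEval_X, evalEval_CC] at this
    exact (mul_eq_zero.mp this).resolve_left hθl

end Polynomial

namespace Lagrange

variable {F ι : Type*} [Field F] [DecidableEq ι]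

theorem eval_basis (s : Finset ι) (v : ι → F) (i : ι) (x : F) :
    (Lagrange.basis s v i).eval x = ∏ j ∈ s.erase i, (x - v j) / (v i - v j) := by
  simp [Lagrange.basis, basisDivisor, eval_prod, div_eq_inv_mul]

theorem eval_basis_eq_ite {s : Finset ι} {v : ι → F} (hvs : Set.InjOn v s) {i j : ι}
    (hi : i ∈ s) (hj : j ∈ s) : (Lagrange.basis s v i).eval (v j) = if j = i then 1 else 0 := by
  split_ifs with hji
  · rw [hji]; exact eval_basis_self hvs hi
  · exact eval_basis_of_ne (Ne.symm hji) hj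

end Lagrange

theorem isLowerSet_bidIdx (d m : ℕ) : IsLowerSet {p : ℕ × ℕ | BidIdx d m p} :=
  fun a b hba ha => by
    simp only [Set.mem_ofPred_eq, BidIdx, Prod.le_def] at ha hba ⊢
    omega

theorem exists_evalEval_of_mem_polySpace {d m : ℕ} {f : ℂ × ℂ → ℂ}
    (hf : f ∈ PolySpace d m) :
    ∃ F : ℂ[X][Y], (∀ k l, ¬BidIdx d m (k, l) → (F.coeff l).coeff k = 0) ∧
      ∀ p, f p = F.evalEval p.1 p.2 := by
  induction hf using Submodule.span_induction with
  | mem f hf =>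
    obtain ⟨k, l, hkl, rfl⟩ := hf
    refine ⟨monomial l (X ^ k), fun k' l' hk'l' => ?_,
      fun p => by simp [evalEval, eval_monomial]⟩
    rw [coeff_monomial]
    split_ifs with hl
    · subst hl
      rw [coeff_X_pow, if_neg (by rintro rfl; exact hk'l' hkl)]
    · exact coeff_zero _
  | zero => exact ⟨0, fun _ _ _ => by simp, fun _ => by simp⟩
  | add f g _ _ hf hg =>
    obtain ⟨F, hF, hFf⟩ := hf
    obtain ⟨G, hG, hGg⟩ := hg
    exact ⟨F + G, fun k l h => by simp [hF k l h, hG k l h], fun p => by simp [hFf, hGg]⟩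
  | smul c f _ hf =>
    obtain ⟨F, hF, hFf⟩ := hf
    exact ⟨CC c * F, fun k l h => by simp [coeff_C_mul, hF k l h], fun p => by simp [hFf]⟩

theorem eq_zero_of_mem_polySpace {η θ : ℕ → ℂ} (hη : Injective η) (hθ : Injective θ)
    {d m : ℕ} {f : ℂ × ℂ → ℂ} (hf : f ∈ PolySpace d m)
    (hgrid : ∀ k l, BidIdx d m (k, l) → f (η k, θ l) = 0) : f = 0 := by
  obtain ⟨F, hFsupp, hFf⟩ := exists_evalEval_of_mem_polySpace hf
  have hF : F = 0 := eq_zero_of_isLowerSet_of_evalEval_eq_zero (isLowerSet_bidIdx d m)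
    hη hθ hFsupp fun k l hkl => (hFf _).symm.trans (hgrid k l hkl)
  funext p
  rw [hFf, hF, evalEval_zero, Pi.zero_apply]

theorem eq_of_mem_polySpace_of_eqOn_grid {η θ : ℕ → ℂ} (hη : Injective η) (hθ : Injective θ)
    {d m : ℕ} {f g : ℂ × ℂ → ℂ} (hf : f ∈ PolySpace d m) (hg : g ∈ PolySpace d m)
    (hgrid : ∀ k l, BidIdx d m (k, l) → f (η k, θ l) = g (η k, θ l)) : f = g :=
  sub_eq_zero.mp <| eq_zero_of_mem_polySpace hη hθ (sub_mem hf hg)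
    fun k l hkl => sub_eq_zero.mpr (hgrid k l hkl)

theorem eval_mul_eval_mem_polySpace {d m : ℕ} {P Q : ℂ[X]}
    (h : BidIdx d m (P.natDegree, Q.natDegree)) :
    (fun p : ℂ × ℂ => P.eval p.1 * Q.eval p.2) ∈ PolySpace d m := by
  have hsum : (fun p : ℂ × ℂ => P.eval p.1 * Q.eval p.2) =
      ∑ k ∈ range (P.natDegree + 1), ∑ l ∈ range (Q.natDegree + 1),
        (P.coeff k * Q.coeff l) • fun p : ℂ × ℂ => p.1 ^ k * p.2 ^ l := by
    funext p
    simp only [eval_eq_sum_range, sum_mul_sum, Finset.sum_apply, Pi.smul_apply, smul_eq_mul]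
    exact sum_congr rfl fun k _ => sum_congr rfl fun l _ => by ring
  rw [hsum]
  refine sum_mem fun k hk => sum_mem fun l hl => Submodule.smul_mem _ _ <|
    Submodule.subset_span ⟨k, l, isLowerSet_bidIdx d m ?_ h, rfl⟩
  exact Prod.mk_le_mk.2
    ⟨Nat.lt_succ_iff.mp (mem_range.mp hk), Nat.lt_succ_iff.mp (mem_range.mp hl)⟩

theorem sum_Icc_one_sub {G : Type*} [AddCommGroup G] (f : ℕ → G) (n : ℕ) :
    ∑ r ∈ Icc 1 n, (f (r + 1) - f r) = f (n + 1) - f 1 := by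
  rcases n with _ | n
  · simp
  · exact sum_Icc_sub (by omega) f

/-- `a t` stands for `∏_{i < t, i ≠ m} (z - η i) / (η m - η i)` and `b s` for
`∏_{j < s, j ≠ q} (w - θ j) / (θ q - θ j)`; the product over `range m` is the case
`t = m + 1`. -/
def flipFormula {R : Type*} [CommRing R] (d m q : ℕ) (a b : ℕ → R) : R :=
  a (m + 1) * b (d - m + 1) - a (m + 1) * b (d - m - 1) + a (m + 2) * b (d - m - 1)
    + ∑ r ∈ Icc 1 (d - m - q - 2),
        (a (m + r + 2) * b (d - m - r - 1) - a (m + r + 1) * b (d - m - r - 1))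

theorem flipFormula_apply {α : Type*} (d m q : ℕ) (a b : ℕ → α → ℂ) (x : α) :
    flipFormula d m q a b x = flipFormula d m q (a · x) (b · x) := by
  simp [flipFormula, Finset.sum_apply]

section flipFormula

variable {R : Type*} [CommRing R] {d m q : ℕ} {a b : ℕ → R}

theorem flipFormula_mem [Module ℂ R] (S : Submodule ℂ R) (hpq : m + q + 2 ≤ d)
    (h : ∀ t s, m < t → q < s → BidIdx d m (t - 1, s - 1) → a t * b s ∈ S) :
    flipFormula d m q a b ∈ S := by
  refine add_mem (add_mem (sub_mem (h _ _ ?_ ?_ ?_) (h _ _ ?_ ?_ ?_)) (h _ _ ?_ ?_ ?_))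
    (sum_mem fun r hr => ?_)
  all_goals try first | omega | (simp only [BidIdx]; omega)
  have := mem_Icc.mp hr
  exact sub_mem (h _ _ (by omega) (by omega) (by simp only [BidIdx]; omega))
    (h _ _ (by omega) (by omega) (by simp only [BidIdx]; omega))

theorem flipFormula_eq_zero_of_left_eq_zero (ha : ∀ t, m < t → a t = 0) :
    flipFormula d m q a b = 0 := by
  simp (disch := omega) only [flipFormula, ha, zero_mul, sub_self, sum_const_zero, add_zero]

theorem flipFormula_eq_of_left_eq_one (ha : ∀ t, m < t → a t = 1) :
    flipFormula d m q a b = b (d - m + 1) := by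
  simp (disch := omega) only [flipFormula, ha, one_mul, sub_self, sum_const_zero, add_zero,
    sub_add_cancel]

theorem flipFormula_eq_of_right_eq_one (hpq : m + q + 2 ≤ d) (hb : ∀ s, q < s → b s = 1) :
    flipFormula d m q a b = a (d - q) := by
  have hsum : ∑ r ∈ Icc 1 (d - m - q - 2),
      (a (m + r + 2) * b (d - m - r - 1) - a (m + r + 1) * b (d - m - r - 1)) =
      ∑ r ∈ Icc 1 (d - m - q - 2), (a (m + (r + 1) + 1) - a (m + r + 1)) :=
    sum_congr rfl fun r hr => by
      rw [mem_Icc] at hr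
      rw [hb _ (by omega), mul_one, mul_one]
      rfl
  rw [flipFormula, hsum, sum_Icc_one_sub (fun r => a (m + r + 1)), hb _ (by omega),
    hb _ (by omega), show m + (d - m - q - 2 + 1) + 1 = d - q by omega]
  ring

theorem flipFormula_eq_ite (hpq : m + q + 2 ≤ d) {k l : ℕ} (hkl : BidIdx d m (k, l))
    (ha : ∀ t, m < t → k < t → a t = if k = m then 1 else 0)
    (hb : ∀ s, q < s → l < s → b s = if l = q then 1 else 0) :
    flipFormula d m q a b = if (k, l) = (m, q) then 1 else 0 := by
  simp only [BidIdx] at hkl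
  rcases lt_trichotomy k m with hkm | rfl | hkm
  · rw [if_neg fun h => hkm.ne (Prod.mk.inj h).1]
    exact flipFormula_eq_zero_of_left_eq_zero fun t ht => by
      rw [ha t ht (by omega), if_neg hkm.ne]
  · rw [flipFormula_eq_of_left_eq_one fun t ht => by rw [ha t ht ht, if_pos rfl],
      hb _ (by omega) (by omega)]
    simp
  rw [if_neg fun h => hkm.ne' (Prod.mk.inj h).1]
  by_cases hlq : l = q
  · subst hlq
    rw [flipFormula_eq_of_right_eq_one hpq fun s hs => by rw [hb s hs hs, if_pos rfl],
      ha _ (by omega) (by omega), if_neg hkm.ne']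
  have hb0 : ∀ s, q < s → l < s → b s = 0 := fun s hq hl => by rw [hb s hq hl, if_neg hlq]
  -- In each summand either both `a`-factors vanish (`k ≤ m + r`) or `b` does
  -- (`l < d - m - r - 1`).
  have hterm : ∀ r ∈ Icc 1 (d - m - q - 2),
      a (m + r + 2) * b (d - m - r - 1) - a (m + r + 1) * b (d - m - r - 1) = 0 := by
    intro r hr
    rw [mem_Icc] at hr
    rcases lt_or_ge k (m + r + 1) with hk | hk
    · rw [ha _ (by omega) (by omega), ha _ (by omega) hk, if_neg hkm.ne', zero_mul, sub_self]
    · rw [hb0 _ (by omega) (by omega), mul_zero, mul_zero, sub_self]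
  rw [flipFormula, sum_eq_zero hterm, hb0 _ (by omega) (by omega), hb0 _ (by omega) (by omega)]
  ring

end flipFormula

theorem statement15_general (η θ : ℕ → ℂ)
    (hη : Function.Injective η) (hθ : Function.Injective θ)
    (d m : ℕ)
    (q : ℕ) (hpq : m + q + 2 ≤ d) :
    ∀ L : (ℂ × ℂ) → ℂ, IsFLIP η θ d m m q L →
      ∀ z w : ℂ,
        L (z, w) =
          (∏ i ∈ range m, (z - η i) / (η m - η i)) *
              (∏ j ∈ (range (d - m + 1)).erase q, (w - θ j) / (θ q - θ j))
            - (∏ i ∈ range m, (z - η i) / (η m - η i)) *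
                (∏ j ∈ (range (d - m - 1)).erase q, (w - θ j) / (θ q - θ j))
            + (∏ i ∈ (range (m + 2)).erase m, (z - η i) / (η m - η i)) *
                (∏ j ∈ (range (d - m - 1)).erase q, (w - θ j) / (θ q - θ j))
            + (∑ r ∈ Finset.Icc 1 (d - m - q - 2),
                ((∏ i ∈ (range (m + r + 2)).erase m, (z - η i) / (η m - η i)) *
                    (∏ j ∈ (range (d - m - r - 1)).erase q, (w - θ j) / (θ q - θ j))
                  - (∏ i ∈ (range (m + r + 1)).erase m, (z - η i) / (η m - η i)) *
                      (∏ j ∈ (range (d - m - r - 1)).erase q,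
                        (w - θ j) / (θ q - θ j)))) := by
  intro L ⟨hLmem, hLone, hLzero⟩ z w
  set a : ℕ → ℂ × ℂ → ℂ := fun t p => (Lagrange.basis (range t) η m).eval p.1
  set b : ℕ → ℂ × ℂ → ℂ := fun s p => (Lagrange.basis (range s) θ q).eval p.2
  have hmem : flipFormula d m q a b ∈ PolySpace d m :=
    flipFormula_mem _ hpq fun t s ht hs hts => eval_mul_eval_mem_polySpace <| by
      rwa [Lagrange.natDegree_basis hη.injOn (mem_range.mpr ht),
        Lagrange.natDegree_basis hθ.injOn (mem_range.mpr hs), card_range, card_range]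
  have hgrid :
      ∀ k l, BidIdx d m (k, l) → L (η k, θ l) = flipFormula d m q a b (η k, θ l) := by
    intro k l hkl
    rw [flipFormula_apply, flipFormula_eq_ite hpq hkl
      (fun t ht hk => Lagrange.eval_basis_eq_ite hη.injOn (mem_range.mpr ht) (mem_range.mpr hk))
      (fun s hs hl => Lagrange.eval_basis_eq_ite hθ.injOn (mem_range.mpr hs) (mem_range.mpr hl))]
    split_ifs with h
    · rwa [(Prod.mk.inj h).1, (Prod.mk.inj h).2]
    · exact hLzero k l hkl h
  have hrange : range m = (range (m + 1)).erase m := by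
    rw [range_add_one, erase_insert notMem_range_self]
  rw [eq_of_mem_polySpace_of_eqOn_grid hη hθ hLmem hmem hgrid, flipFormula_apply, hrange]
  simp only [a, b, Lagrange.eval_basis]
  rfl

/-- in the bidimensional intertwining setting, for a point
`(η_m, θ_q) ∈ Ω_N` with `p = m` and `p+q ≤ d−2`,
the FLIP is given by the explicit formula with one correcting sum. -/
theorem statement15 (η θ : ℕ → ℂ)
    (hη : Function.Injective η) (hθ : Function.Injective θ)
    (N d m : ℕ) (hN : 1 ≤ N)
    (hlow : d * (d + 1) / 2 < N) (hhigh : N ≤ (d + 1) * (d + 2) / 2)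
    (hm : N = d * (d + 1) / 2 + 1 + m)
    (q : ℕ) (hpq : m + q + 2 ≤ d) :
    ∀ L : (ℂ × ℂ) → ℂ, IsFLIP η θ d m m q L →
      ∀ z w : ℂ,
        L (z, w) =
          (∏ i ∈ range m, (z - η i) / (η m - η i)) *
              (∏ j ∈ (range (d - m + 1)).erase q, (w - θ j) / (θ q - θ j))
            - (∏ i ∈ range m, (z - η i) / (η m - η i)) *
                (∏ j ∈ (range (d - m - 1)).erase q, (w - θ j) / (θ q - θ j))
            + (∏ i ∈ (range (m + 2)).erase m, (z - η i) / (η m - η i)) *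
                (∏ j ∈ (range (d - m - 1)).erase q, (w - θ j) / (θ q - θ j))
            + (∑ r ∈ Finset.Icc 1 (d - m - q - 2),
                ((∏ i ∈ (range (m + r + 2)).erase m, (z - η i) / (η m - η i)) *
                    (∏ j ∈ (range (d - m - r - 1)).erase q, (w - θ j) / (θ q - θ j))
                  - (∏ i ∈ (range (m + r + 1)).erase m, (z - η i) / (η m - η i)) *
                      (∏ j ∈ (range (d - m - r - 1)).erase q,
                        (w - θ j) / (θ q - θ j)))) :=
  statement15_general η θ hη hθ d m q hpq
end

section
/- Let (η_i)_{i≥0} and (θ_j)_{j≥0} be sequences of pairwise distinct complex numbers, N ≥ 1 with associated integers d, m, and Ω_N, 𝒫_N as in the bidimensional intertwining setting. If (η_p,θ_q) ∈ Ω_N with p+q ≤ d−2 and p ≥ m+1, then for all (z,w) ∈ ℂ²: l^{(N)}_{(η_p,θ_q)}(z,w) = ∏_{i=0}^{p−1} (z−η_i)/(η_p−η_i) ∏_{j=0,j≠q}^{d−p−1} (w−θ_j)/(θ_q−θ_j) − ∏_{i=0}^{p−1} (z−η_i)/(η_p−η_i) ∏_{j=0,j≠q}^{d−p−2} (w−θ_j)/(θ_q−θ_j)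 + ∏_{i=0,i≠p}^{p+1} (z−η_i)/(η_p−η_i) ∏_{j=0,j≠q}^{d−p−2} (w−θ_j)/(θ_q−θ_j) + Σ_{r=1}^{d−p−q−2} [∏_{i=0,i≠p}^{p+r+1} (z−η_i)/(η_p−η_i) ∏_{j=0,j≠q}^{d−p−r−2} (w−θ_j)/(θ_q−θ_j) − ∏_{i=0,i≠p}^{p+r} (z−η_i)/(η_p−η_i) ∏_{j=0,j≠q}^{d−p−r−2} (w−θ_j)/(θ_q−θ_j)]. -/
open Finset

/-!
Write a polynomial as `∑ₖ Pₖ(w) zᵏ`. Both `𝒫_N` and the nodes `Ω_N` are described by one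
staircase: `z^k w^l ∈ 𝒫_N` and `(η k, θ l) ∈ Ω_N` iff `l < c k`, with `c = bidProfile d m`.
A polynomial with `deg Pₖ < c k` for an antitone `c` that vanishes at all `(η k, θ l)`, `l < c k`,
is zero: its restriction to `z = η 0` has too many roots, and the quotient by `z - η 0` satisfies
the same hypotheses for the shifted staircase. Hence the FLIP is the unique polynomial of this
shape with the FLIP values at the nodes. After summation by parts the right-hand side is a
combination of products of univariate Lagrange polynomials on `t × s` rectangles with
`t + s ≤ d + 1`, which fit under the staircase, and its nodal values are checked case by case.
-/

open Polynomial

noncomputable section Staircase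

variable {R : Type*} [CommRing R]

/-- Bivariate polynomials `∑ₖ Pₖ(w) zᵏ ∈ R[w][z]` with `deg Pₖ < c k`. -/
def staircase (c : ℕ → ℕ) : Submodule R R[X][X] where
  carrier := {P | ∀ k, P.coeff k ∈ degreeLT R (c k)}
  add_mem' hP hQ k := by simpa only [coeff_add] using add_mem (hP k) (hQ k)
  zero_mem' k := by simpa only [coeff_zero] using zero_mem _
  smul_mem' a P hP k := by simpa only [coeff_smul] using Submodule.smul_mem _ a (hP k)

/-- A polynomial `P ∈ R[w][z]` as the function `(z, w) ↦ P(z, w)`. -/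
def bivariateEval : R[X][X] →ₗ[R] (R × R → R) where
  toFun P x := P.evalEval x.2 x.1
  map_add' P Q := funext fun x => evalEval_add x.2 x.1 P Q
  map_smul' a P := funext fun x => evalEval_smul x.2 x.1 a P

def staircaseFun (c : ℕ → ℕ) : Submodule R (R × R → R) :=
  (staircase c).map bivariateEval

theorem eval_C_mem_degreeLT {c : ℕ → ℕ} (hc : Antitone c) {P : R[X][X]}
    (hP : P ∈ staircase c) (a : R) : P.eval (C a) ∈ degreeLT R (c 0) := by
  rw [eval_eq_sum_range]
  refine Submodule.sum_mem _ fun i _ => ?_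
  rw [← C_pow, mul_comm, ← smul_eq_C_mul]
  exact Submodule.smul_mem _ _ (degreeLT_mono (hc (Nat.zero_le i)) (hP i))

theorem divByMonic_X_sub_C_mem_staircase {c : ℕ → ℕ} (hc : Antitone c) {P : R[X][X]}
    (hP : P ∈ staircase c) (a : R) :
    P /ₘ (X - C (C a)) ∈ staircase (fun k => c (k + 1)) := by
  intro k
  rw [coeff_divByMonic_X_sub_C]
  refine Submodule.sum_mem _ fun i hi => ?_
  rw [← C_pow, ← smul_eq_C_mul]
  exact Submodule.smul_mem _ _ (degreeLT_mono (hc (mem_Icc.mp hi).1) (hP i))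

theorem eq_zero_of_mem_staircase [IsDomain R] {c : ℕ → ℕ} (hc : Antitone c) {η θ : ℕ → R}
    (hη : Function.Injective η) (hθ : Function.Injective θ) {P : R[X][X]}
    (hP : P ∈ staircase c) (hP0 : ∀ k l, l < c k → P.evalEval (θ l) (η k) = 0) : P = 0 := by
  induction hn : P.natDegree using Nat.strong_induction_on generalizing P c η with
  | _ n ih =>
  have hroot : P.IsRoot (C (η 0)) := by
    refine eq_zero_of_degree_lt_of_eval_index_eq_zero (range (c 0)) hθ.injOn ?_ ?_
    · simpa [mem_degreeLT] using eval_C_mem_degreeLT hc hP (η 0)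
    · exact fun l hl => hP0 0 l (mem_range.mp hl)
  set Q := P /ₘ (X - C (C (η 0)))
  have hPQ : P = (X - C (C (η 0))) * Q := ((mul_divByMonic_eq_iff_isRoot).mpr hroot).symm
  have hQ0 : Q = 0 := by
    obtain hQ | hQ := eq_or_ne Q 0
    · exact hQ
    refine ih Q.natDegree ?_ (hc.comp_monotone fun a b h => Nat.succ_le_succ h)
      (η := fun k => η (k + 1)) (fun a b h => by simpa using hη h)
      (divByMonic_X_sub_C_mem_staircase hc hP _) (fun k l hl => ?_) rfl
    · rw [← hn, hPQ, natDegree_mul (X_sub_C_ne_zero _) hQ, natDegree_X_sub_C]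
      omega
    · have h := hP0 (k + 1) l hl
      rw [hPQ, evalEval_mul, evalEval_sub, evalEval_X, evalEval_C, eval_C] at h
      exact (mul_eq_zero.mp h).resolve_left (sub_ne_zero.mpr (hη.ne (by omega)))
  rw [hPQ, hQ0, mul_zero]

theorem eq_zero_of_mem_staircaseFun [IsDomain R] {c : ℕ → ℕ} (hc : Antitone c) {η θ : ℕ → R}
    (hη : Function.Injective η) (hθ : Function.Injective θ) {f : R × R → R}
    (hf : f ∈ staircaseFun c) (hf0 : ∀ k l, l < c k → f (η k, θ l) = 0) : f = 0 := by
  obtain ⟨P, hP, rfl⟩ := hf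
  rw [eq_zero_of_mem_staircase hc hη hθ hP hf0, map_zero]

theorem mul_mem_staircaseFun {c : ℕ → ℕ} (hc : Antitone c) {f g : R[X]} {a : ℕ}
    (hf : f.natDegree ≤ a) (hg : g.degree < c a) :
    (fun x : R × R => f.eval x.1 * g.eval x.2) ∈ staircaseFun c := by
  refine ⟨C g * f.map C, fun k => ?_, funext fun x => ?_⟩
  · rw [coeff_C_mul, coeff_map, mul_comm, ← smul_eq_C_mul]
    obtain hk | hk := le_or_gt k a
    · exact Submodule.smul_mem _ _ (degreeLT_mono (hc hk) (mem_degreeLT.mpr hg))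
    · rw [coeff_eq_zero_of_natDegree_lt (hf.trans_lt hk), zero_smul]
      exact zero_mem _
  · simp only [bivariateEval, LinearMap.coe_mk, AddHom.coe_mk, evalEval_mul, evalEval_C,
      evalEval_map_C, mul_comm]

end Staircase

def bidProfile (d m k : ℕ) : ℕ :=
  if k ≤ m then d + 1 - k else d - k

theorem bidIdx_iff_lt_bidProfile {d m k l : ℕ} : BidIdx d m (k, l) ↔ l < bidProfile d m k := by
  unfold BidIdx bidProfile
  split_ifs <;> omega

theorem antitone_bidProfile (d m : ℕ) : Antitone (bidProfile d m) := by
  intro a b hab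
  unfold bidProfile
  split_ifs <;> omega

theorem polySpace_le_staircaseFun (d m : ℕ) : PolySpace d m ≤ staircaseFun (bidProfile d m) := by
  refine Submodule.span_le.mpr ?_
  rintro _ ⟨k, l, hkl, rfl⟩
  rw [SetLike.mem_coe]
  simpa only [eval_pow, eval_X] using mul_mem_staircaseFun (antitone_bidProfile d m)
    (natDegree_X_pow_le k) ((degree_X_pow_le l).trans_lt
      (by exact_mod_cast bidIdx_iff_lt_bidProfile.mp hkl))

theorem IsFLIP.eq_of_mem_staircaseFun {η θ : ℕ → ℂ} (hη : Function.Injective η)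
    (hθ : Function.Injective θ) {d m p q : ℕ} {L Φ : ℂ × ℂ → ℂ} (hL : IsFLIP η θ d m p q L)
    (hΦ : Φ ∈ staircaseFun (bidProfile d m)) (hΦ1 : Φ (η p, θ q) = 1)
    (hΦ0 : ∀ k l, BidIdx d m (k, l) → (k, l) ≠ (p, q) → Φ (η k, θ l) = 0) : L = Φ := by
  refine sub_eq_zero.mp (eq_zero_of_mem_staircaseFun (antitone_bidProfile d m) hη hθ
    (sub_mem (polySpace_le_staircaseFun d m hL.1) hΦ) fun k l hl => ?_)
  have hkl := bidIdx_iff_lt_bidProfile.mpr hl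
  obtain hpq | hpq := eq_or_ne (k, l) (p, q)
  · obtain ⟨rfl, rfl⟩ := Prod.mk.inj hpq
    simp [hL.2.1, hΦ1]
  · simp [hL.2.2 k l hkl hpq, hΦ0 k l hkl hpq]

section StairSum

variable {R : Type*} [CommRing R] (d p q : ℕ) (U V : ℕ → R)

/-- The FLIP of the theorem regrouped by summation by parts; `U t` and `V s` stand for the
univariate Lagrange factors of `η p` among `η 0, …, η (t-1)` and of `θ q` among
`θ 0, …, θ (s-1)`. -/
def stairSum : R :=
  U (p + 1) * V (d - p) +
    ∑ r ∈ range (d - p - q - 1), (U (p + r + 2) - U (p + r + 1)) * V (d - p - r - 1)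

theorem stairSum_eq (hpq : p + q + 2 ≤ d) :
    stairSum d p q U V =
      U (p + 1) * V (d - p) - U (p + 1) * V (d - p - 1) + U (p + 2) * V (d - p - 1) +
        ∑ r ∈ Icc 1 (d - p - q - 2),
          (U (p + r + 2) * V (d - p - r - 1) - U (p + r + 1) * V (d - p - r - 1)) := by
  have hn : d - p - q - 1 = d - p - q - 2 + 1 := by omega
  rw [stairSum, hn, sum_range_succ', ← Ico_add_one_right_eq_Icc, sum_Ico_eq_sum_range,
    Nat.add_sub_cancel]
  simp only [← sub_mul, add_comm 1, Nat.add_zero, Nat.sub_zero]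
  ring

variable {d p q U V}

theorem stairSum_of_left_const {a : R} (hU : ∀ t, p < t → U t = a) :
    stairSum d p q U V = a * V (d - p) := by
  rw [stairSum, hU (p + 1) (by omega), sum_eq_zero fun r _ => ?_, add_zero]
  rw [hU (p + r + 2) (by omega), hU (p + r + 1) (by omega), sub_self, zero_mul]

theorem stairSum_of_right_const {b : R} (hpq : p + q + 1 ≤ d) (hV : ∀ s, q < s → V s = b) :
    stairSum d p q U V = b * U (d - q) := by
  have hsum : ∑ r ∈ range (d - p - q - 1), (U (p + r + 2) - U (p + r + 1)) * V (d - p - r - 1)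
      = (U (p + (d - p - q - 1) + 1) - U (p + 0 + 1)) * b := by
    rw [← sum_range_sub (fun r => U (p + r + 1)), sum_mul]
    refine sum_congr rfl fun r hr => ?_
    rw [mem_range] at hr
    rw [hV _ (by omega), show p + (r + 1) + 1 = p + r + 2 by omega]
  rw [stairSum, hsum, hV _ (by omega), show p + (d - p - q - 1) + 1 = d - q by omega]
  ring

/-- Each summand vanishes: either `l < d - p - r - 1` kills the `V` factor, or `k < p + r + 1`
kills both `U` factors. -/
theorem stairSum_eq_zero {k l : ℕ} (hU : ∀ t, k < t → U t = 0) (hV : ∀ s, l < s → V s = 0)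
    (hpk : p ≤ k) (hkl : k + l < d) : stairSum d p q U V = 0 := by
  rw [stairSum, hV (d - p) (by omega), mul_zero, zero_add]
  refine sum_eq_zero fun r _ => ?_
  obtain hl | hl := lt_or_ge l (d - p - r - 1)
  · rw [hV _ hl, mul_zero]
  · rw [hU (p + r + 2) (by omega), hU (p + r + 1) (by omega), sub_self, zero_mul]

end StairSum

theorem stairSum_mem {R α : Type*} [CommRing R] {S : Submodule R (α → R)} {d p q : ℕ}
    {U V : ℕ → α → R} (hpq : p + q + 1 ≤ d)
    (hUV : ∀ t s, p < t → q < s → t + s ≤ d + 1 → (fun x => U t x * V s x) ∈ S) :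
    (fun x => stairSum d p q (fun t => U t x) (fun s => V s x)) ∈ S := by
  have hsplit : (fun x => stairSum d p q (fun t => U t x) (fun s => V s x)) =
      (fun x => U (p + 1) x * V (d - p) x) + ∑ r ∈ range (d - p - q - 1),
        ((fun x => U (p + r + 2) x * V (d - p - r - 1) x) -
          fun x => U (p + r + 1) x * V (d - p - r - 1) x) := by
    funext x
    simp only [stairSum, Pi.add_apply, Finset.sum_apply, Pi.sub_apply, sub_mul]
  rw [hsplit]
  refine add_mem (hUV _ _ (by omega) (by omega) (by omega)) (sum_mem fun r hr => ?_)
  rw [mem_range] at hr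
  exact sub_mem (hUV _ _ (by omega) (by omega) (by omega))
    (hUV _ _ (by omega) (by omega) (by omega))

theorem Lagrange.eval_basis_s16 {F ι : Type*} [Field F] [DecidableEq ι] (s : Finset ι) (v : ι → F)
    (i : ι) (x : F) :
    (Lagrange.basis s v i).eval x = ∏ j ∈ s.erase i, (x - v j) / (v i - v j) := by
  simp only [Lagrange.basis, Lagrange.basisDivisor, eval_prod, eval_mul, eval_C, eval_sub,
    eval_X, div_eq_inv_mul]

noncomputable def flipCandidate (η θ : ℕ → ℂ) (d p q : ℕ) (x : ℂ × ℂ) : ℂ :=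
  stairSum d p q (fun t => (Lagrange.basis (range t) η p).eval x.1)
    (fun s => (Lagrange.basis (range s) θ q).eval x.2)

section FLIP

variable {η θ : ℕ → ℂ} {d m p q : ℕ}

theorem basis_mul_basis_mem_staircaseFun (hη : Function.Injective η)
    (hθ : Function.Injective θ) {t s : ℕ} (ht : p < t) (hs : q < s) (hts : t + s ≤ d + 1) :
    (fun x : ℂ × ℂ => (Lagrange.basis (range t) η p).eval x.1 *
      (Lagrange.basis (range s) θ q).eval x.2) ∈ staircaseFun (bidProfile d m) := by
  refine mul_mem_staircaseFun (antitone_bidProfile d m) (a := t - 1) ?_ ?_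
  · rw [Lagrange.natDegree_basis hη.injOn (mem_range.mpr ht), card_range]
  · rw [Lagrange.degree_basis hθ.injOn (mem_range.mpr hs), card_range]
    have hst : s - 1 < bidProfile d m (t - 1) := by unfold bidProfile; split_ifs <;> omega
    exact_mod_cast hst

theorem flipCandidate_mem (hη : Function.Injective η) (hθ : Function.Injective θ)
    (hpq : p + q + 1 ≤ d) : flipCandidate η θ d p q ∈ staircaseFun (bidProfile d m) :=
  stairSum_mem hpq fun _ _ ht hs hts => basis_mul_basis_mem_staircaseFun hη hθ ht hs hts

theorem flipCandidate_apply_self (hη : Function.Injective η) (hθ : Function.Injective θ)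
    (hpq : p + q + 1 ≤ d) : flipCandidate η θ d p q (η p, θ q) = 1 := by
  rw [flipCandidate, stairSum_of_left_const (a := 1)
    fun t ht => Lagrange.eval_basis_self hη.injOn (mem_range.mpr ht), one_mul,
    Lagrange.eval_basis_self hθ.injOn (mem_range.mpr (by omega))]

theorem flipCandidate_apply_of_ne (hη : Function.Injective η) (hθ : Function.Injective θ)
    (hp : m < p) (hpq : p + q + 1 ≤ d) {k l : ℕ} (hkl : BidIdx d m (k, l))
    (hne : (k, l) ≠ (p, q)) : flipCandidate η θ d p q (η k, θ l) = 0 := by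
  have hsum : p ≤ k → k + l < d := by unfold BidIdx at hkl; omega
  rw [flipCandidate]
  rcases lt_trichotomy k p with hk | rfl | hk
  · rw [stairSum_of_left_const (a := 0)
      fun t ht => Lagrange.eval_basis_of_ne (by omega) (mem_range.mpr (by omega)), zero_mul]
  · have hl : q ≠ l := by rintro rfl; exact hne rfl
    rw [stairSum_of_left_const (a := 1)
      fun t ht => Lagrange.eval_basis_self hη.injOn (mem_range.mpr ht), one_mul,
      Lagrange.eval_basis_of_ne hl (mem_range.mpr (by omega))]
  · obtain rfl | hl := eq_or_ne l q
    · rw [stairSum_of_right_const hpq (b := 1)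
        fun s hs => Lagrange.eval_basis_self hθ.injOn (mem_range.mpr hs), one_mul,
        Lagrange.eval_basis_of_ne (by omega) (mem_range.mpr (by omega))]
    · exact stairSum_eq_zero
        (fun t ht => Lagrange.eval_basis_of_ne (by omega) (mem_range.mpr ht))
        (fun s hs => Lagrange.eval_basis_of_ne hl.symm (mem_range.mpr hs)) hk.le (hsum hk.le)

end FLIP

theorem statement16_general (η θ : ℕ → ℂ)
    (hη : Function.Injective η) (hθ : Function.Injective θ)
    (d m : ℕ)
    (p q : ℕ) (hpq : p + q + 2 ≤ d) (hp : m + 1 ≤ p) :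
    ∀ L : (ℂ × ℂ) → ℂ, IsFLIP η θ d m p q L →
      ∀ z w : ℂ,
        L (z, w) =
          (∏ i ∈ range p, (z - η i) / (η p - η i)) *
              (∏ j ∈ (range (d - p)).erase q, (w - θ j) / (θ q - θ j))
            - (∏ i ∈ range p, (z - η i) / (η p - η i)) *
                (∏ j ∈ (range (d - p - 1)).erase q, (w - θ j) / (θ q - θ j))
            + (∏ i ∈ (range (p + 2)).erase p, (z - η i) / (η p - η i)) *
                (∏ j ∈ (range (d - p - 1)).erase q, (w - θ j) / (θ q - θ j))
            + (∑ r ∈ Finset.Icc 1 (d - p - q - 2),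
                ((∏ i ∈ (range (p + r + 2)).erase p, (z - η i) / (η p - η i)) *
                    (∏ j ∈ (range (d - p - r - 1)).erase q, (w - θ j) / (θ q - θ j))
                  - (∏ i ∈ (range (p + r + 1)).erase p, (z - η i) / (η p - η i)) *
                      (∏ j ∈ (range (d - p - r - 1)).erase q,
                        (w - θ j) / (θ q - θ j)))) := by
  intro L hL z w
  have hL_eq : L = flipCandidate η θ d p q :=
    hL.eq_of_mem_staircaseFun hη hθ (flipCandidate_mem hη hθ (by omega))
      (flipCandidate_apply_self hη hθ (by omega))
      fun k l => flipCandidate_apply_of_ne hη hθ (by omega) (by omega)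
  have hrange : (range (p + 1)).erase p = range p := by
    rw [range_add_one, erase_insert notMem_range_self]
  rw [hL_eq, flipCandidate, stairSum_eq _ _ _ _ _ hpq]
  simp only [Lagrange.eval_basis_s16, hrange]

/-- in the bidimensional intertwining setting, for a point
`(η_p, θ_q) ∈ Ω_N` with `p+q ≤ d−2` and `p ≥ m+1`,
the FLIP is given by the explicit formula with one correcting sum. -/
theorem statement16 (η θ : ℕ → ℂ)
    (hη : Function.Injective η) (hθ : Function.Injective θ)
    (N d m : ℕ) (hN : 1 ≤ N)
    (hlow : d * (d + 1) / 2 < N) (hhigh : N ≤ (d + 1) * (d + 2) / 2)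
    (hm : N = d * (d + 1) / 2 + 1 + m)
    (p q : ℕ) (hpq : p + q + 2 ≤ d) (hp : m + 1 ≤ p) :
    ∀ L : (ℂ × ℂ) → ℂ, IsFLIP η θ d m p q L →
      ∀ z w : ℂ,
        L (z, w) =
          (∏ i ∈ range p, (z - η i) / (η p - η i)) *
              (∏ j ∈ (range (d - p)).erase q, (w - θ j) / (θ q - θ j))
            - (∏ i ∈ range p, (z - η i) / (η p - η i)) *
                (∏ j ∈ (range (d - p - 1)).erase q, (w - θ j) / (θ q - θ j))
            + (∏ i ∈ (range (p + 2)).erase p, (z - η i) / (η p - η i)) *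
                (∏ j ∈ (range (d - p - 1)).erase q, (w - θ j) / (θ q - θ j))
            + (∑ r ∈ Finset.Icc 1 (d - p - q - 2),
                ((∏ i ∈ (range (p + r + 2)).erase p, (z - η i) / (η p - η i)) *
                    (∏ j ∈ (range (d - p - r - 1)).erase q, (w - θ j) / (θ q - θ j))
                  - (∏ i ∈ (range (p + r + 1)).erase p, (z - η i) / (η p - η i)) *
                      (∏ j ∈ (range (d - p - r - 1)).erase q,
                        (w - θ j) / (θ q - θ j)))) :=
  statement16_general η θ hη hθ d m p q hpq hp
end
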